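/- Monotone decrease of TSD: for the TSD iteration on a strongly convex quadratic f, whenever g_k ≠ 0 we have f(x_{k+1}) < f(x_k), both at ordinary Cauchy steps and at the triangle steps using p_k = -α_{k-1}g_{k-1} - α_{k-2}g_{k-2}. -/

import Mathlib

/-!
Exact line search along a descent direction `p` (one with `pᵀg < 0`) strictly decreases the
quadratic, since `f (x + α p) = f x - (pᵀg)² / (2 pᵀAp)`. At a Cauchy step `p = -g`. At a
triangle step `k` the two preceding steps are Cauchy steps because `j ≥ 3`, so consecutive
gradients are orthogonal and `g_{k-1} = g_{k-2} - α_{k-2} A g_{k-2}`; with the symmetry of `A`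
this gives `p_kᵀg_k = -α_{k-1} ‖g_{k-1}‖² < 0`.
-/

open Matrix

namespace Matrix

variable {ι R : Type*} [Fintype ι]

theorem IsSymm.dotProduct_mulVec_comm [CommSemiring R] {A : Matrix ι ι R} (hA : A.IsSymm)
    (v w : ι → R) : v ⬝ᵥ (A *ᵥ w) = w ⬝ᵥ (A *ᵥ v) := by
  rw [dotProduct_mulVec, ← mulVec_transpose, hA.eq, dotProduct_comm]

theorem IsSymm.combination_dotProduct_of_two_steps [CommRing R] {A : Matrix ι ι R}
    (hA : A.IsSymm) {g₀ g₁ g₂ : ι → R} {a₁ a₂ : R}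
    (h₁ : g₁ = g₂ - a₂ • (A *ᵥ g₂)) (h₀ : g₀ = g₁ - a₁ • (A *ᵥ g₁))
    (h₂₁ : g₂ ⬝ᵥ g₁ = 0) (h₁₀ : g₁ ⬝ᵥ g₀ = 0) :
    (-a₁ • g₁ - a₂ • g₂) ⬝ᵥ g₀ = -(a₁ * (g₁ ⬝ᵥ g₁)) := by
  have h₁₁ : a₂ * (g₁ ⬝ᵥ (A *ᵥ g₂)) = -(g₁ ⬝ᵥ g₁) := by
    have := congrArg (g₁ ⬝ᵥ ·) h₁
    simp only [dotProduct_sub, dotProduct_smul, smul_eq_mul, dotProduct_comm g₁ g₂, h₂₁] at this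
    linear_combination this
  have h₂₀ : g₂ ⬝ᵥ g₀ = -(a₁ * (g₁ ⬝ᵥ (A *ᵥ g₂))) := by
    rw [h₀, dotProduct_sub, dotProduct_smul, h₂₁, hA.dotProduct_mulVec_comm, smul_eq_mul]
    ring
  rw [sub_dotProduct, smul_dotProduct, smul_dotProduct, h₁₀, h₂₀, smul_eq_mul, smul_eq_mul]
  linear_combination a₁ * h₁₁

theorem dotProduct_add_smul_mulVec_eq_zero [Field R] {A : Matrix ι ι R} {d : ι → R}
    (hd : d ⬝ᵥ (A *ᵥ d) ≠ 0) (g : ι → R) :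
    d ⬝ᵥ (g + (-(d ⬝ᵥ g) / (d ⬝ᵥ (A *ᵥ d))) • (A *ᵥ d)) = 0 := by
  rw [dotProduct_add, dotProduct_smul, smul_eq_mul, div_mul_cancel₀ _ hd, add_neg_cancel]

section OrderedRing

variable [Ring R] [LinearOrder R] [IsStrictOrderedRing R]

theorem dotProduct_self_pos {v : ι → R} (hv : v ≠ 0) : 0 < v ⬝ᵥ v :=
  (Fintype.sum_nonneg fun i ↦ mul_self_nonneg (v i)).lt_of_ne'
    (dotProduct_self_eq_zero.not.mpr hv)

theorem neg_dotProduct_self_neg {v : ι → R} (hv : v ≠ 0) : -v ⬝ᵥ v < 0 := by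
  rw [neg_dotProduct]
  exact neg_neg_of_pos (dotProduct_self_pos hv)

end OrderedRing

theorem PosDef.dotProduct_mulVec_pos_real {A : Matrix ι ι ℝ} (hA : A.PosDef) {v : ι → ℝ}
    (hv : v ≠ 0) : 0 < v ⬝ᵥ (A *ᵥ v) := by
  simpa using hA.dotProduct_mulVec_pos hv

end Matrix

theorem Nat.not_dvd_of_dvd_add_of_lt {j m r : ℕ} (h : j ∣ m + r) (hr : 0 < r) (hrj : r < j) :
    ¬ j ∣ m :=
  fun hm ↦ Nat.not_dvd_of_pos_of_lt hr hrj ((Nat.dvd_add_right hm).mp h)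

section Quadratic

variable {ι : Type*} [Fintype ι] {A : Matrix ι ι ℝ} {b : ι → ℝ} {f : (ι → ℝ) → ℝ}

theorem quadratic_add_smul (hA : A.IsSymm) (hf : ∀ z, f z = 1 / 2 * (z ⬝ᵥ (A *ᵥ z)) + b ⬝ᵥ z)
    (x d : ι → ℝ) (c : ℝ) :
    f (x + c • d) = f x + c * (d ⬝ᵥ (A *ᵥ x + b)) + c ^ 2 / 2 * (d ⬝ᵥ (A *ᵥ d)) := by
  simp only [hf, mulVec_add, mulVec_smul, dotProduct_add, add_dotProduct, dotProduct_smul,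
    smul_dotProduct, smul_eq_mul]
  rw [hA.dotProduct_mulVec_comm d x, dotProduct_comm b d]
  ring

theorem quadratic_exactLineSearch_lt (hA : A.PosDef)
    (hf : ∀ z, f z = 1 / 2 * (z ⬝ᵥ (A *ᵥ z)) + b ⬝ᵥ z) {x d : ι → ℝ}
    (hd : d ⬝ᵥ (A *ᵥ x + b) < 0) :
    f (x + (-(d ⬝ᵥ (A *ᵥ x + b)) / (d ⬝ᵥ (A *ᵥ d))) • d) < f x := by
  have hd₀ : d ≠ 0 := by
    rintro rfl
    simp at hd
  rw [quadratic_add_smul (isHermitian_iff_isSymm.mp hA.isHermitian) hf]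
  set s := d ⬝ᵥ (A *ᵥ x + b)
  set q := d ⬝ᵥ (A *ᵥ d)
  have hq : 0 < q := hA.dotProduct_mulVec_pos_real hd₀
  have hvalue : -s / q * s + (-s / q) ^ 2 / 2 * q = -(s ^ 2 / (2 * q)) := by
    field_simp
    ring
  have : 0 < s ^ 2 / (2 * q) := div_pos (sq_pos_of_ne_zero hd.ne) (by positivity)
  linarith

structure IsExactLineSearch (A : Matrix ι ι ℝ) (b : ι → ℝ) (x g p : ℕ → ι → ℝ) (α : ℕ → ℝ) :
    Prop where
  grad_eq : ∀ k, g k = A *ᵥ x k + b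
  stepsize_eq : ∀ k, α k = -(p k ⬝ᵥ g k) / (p k ⬝ᵥ (A *ᵥ p k))
  succ_eq : ∀ k, x (k + 1) = if g k = 0 then x k else x k + α k • p k

namespace IsExactLineSearch

variable {x g p : ℕ → ι → ℝ} {α : ℕ → ℝ} (h : IsExactLineSearch A b x g p α) {k : ℕ}
include h

theorem grad_succ_eq_zero (hk : g k = 0) : g (k + 1) = 0 := by
  rw [h.grad_eq, h.succ_eq, if_pos hk, ← h.grad_eq, hk]

theorem grad_succ (hk : g k ≠ 0) : g (k + 1) = g k + α k • (A *ᵥ p k) := by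
  rw [h.grad_eq, h.succ_eq, if_neg hk, mulVec_add, mulVec_smul, h.grad_eq k, add_right_comm]

theorem dotProduct_grad_succ (hA : A.PosDef) (hk : g k ≠ 0) (hp : p k ≠ 0) :
    p k ⬝ᵥ g (k + 1) = 0 := by
  rw [h.grad_succ hk, h.stepsize_eq]
  exact dotProduct_add_smul_mulVec_eq_zero (hA.dotProduct_mulVec_pos_real hp).ne' _

theorem stepsize_pos (hA : A.PosDef) (hd : p k ⬝ᵥ g k < 0) : 0 < α k := by
  have hp : p k ≠ 0 := by
    intro hp
    simp [hp] at hd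
  rw [h.stepsize_eq]
  exact div_pos (neg_pos.mpr hd) (hA.dotProduct_mulVec_pos_real hp)

theorem lt_of_dotProduct_neg (hA : A.PosDef)
    (hf : ∀ z, f z = 1 / 2 * (z ⬝ᵥ (A *ᵥ z)) + b ⬝ᵥ z) (hk : g k ≠ 0) (hd : p k ⬝ᵥ g k < 0) :
    f (x (k + 1)) < f (x k) := by
  rw [h.grad_eq] at hd
  rw [h.succ_eq, if_neg hk, h.stepsize_eq, h.grad_eq]
  exact quadratic_exactLineSearch_lt hA hf hd

theorem grad_succ_of_steepest (hk : g k ≠ 0) (hp : p k = -g k) :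
    g (k + 1) = g k - α k • (A *ᵥ g k) := by
  rw [h.grad_succ hk, hp, mulVec_neg, smul_neg, sub_eq_add_neg]

theorem dotProduct_grad_succ_of_steepest (hA : A.PosDef) (hk : g k ≠ 0) (hp : p k = -g k) :
    g k ⬝ᵥ g (k + 1) = 0 := by
  simpa [hp] using h.dotProduct_grad_succ hA hk (hp ▸ neg_ne_zero.mpr hk)

theorem dotProduct_grad_of_two_steepest (hA : A.PosDef) (hk₀ : g k ≠ 0) (hk₁ : g (k + 1) ≠ 0)
    (hp₀ : p k = -g k) (hp₁ : p (k + 1) = -g (k + 1)) :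
    (-α (k + 1) • g (k + 1) - α k • g k) ⬝ᵥ g (k + 2) =
      -(α (k + 1) * (g (k + 1) ⬝ᵥ g (k + 1))) :=
  (isHermitian_iff_isSymm.mp hA.isHermitian).combination_dotProduct_of_two_steps
    (h.grad_succ_of_steepest hk₀ hp₀) (h.grad_succ_of_steepest hk₁ hp₁)
    (h.dotProduct_grad_succ_of_steepest hA hk₀ hp₀)
    (h.dotProduct_grad_succ_of_steepest hA hk₁ hp₁)

end IsExactLineSearch

end Quadratic

/-- Monotone decrease of TSD: whenever g_k ≠ 0, f(x_{k+1}) < f(x_k), both at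
ordinary Cauchy steps and at the triangle steps. -/
theorem tsd_monotone_decrease {n : ℕ}
    (A : Matrix (Fin n) (Fin n) ℝ) (hA : A.PosDef) (b : Fin n → ℝ)
    (f : (Fin n → ℝ) → ℝ)
    (hf : ∀ z, f z = (1 / 2) * (z ⬝ᵥ (A *ᵥ z)) + b ⬝ᵥ z)
    (j : ℕ) (hj : 3 ≤ j)
    (x g p : ℕ → Fin n → ℝ) (α : ℕ → ℝ)
    (hg : ∀ k, g k = A *ᵥ x k + b)
    (hp : ∀ k, p k = if k ≠ 0 ∧ j ∣ k
      then (-(α (k - 1))) • g (k - 1) - (α (k - 2)) • g (k - 2) else -(g k))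
    (hα : ∀ k, α k = -(p k ⬝ᵥ g k) / (p k ⬝ᵥ (A *ᵥ p k)))
    (hstep : ∀ k, x (k + 1) = if g k = 0 then x k else x k + α k • p k) :
    ∀ k, g k ≠ 0 → f (x (k + 1)) < f (x k) := by
  have hls : IsExactLineSearch A b x g p α := ⟨hg, hα, hstep⟩
  intro k hk
  refine hls.lt_of_dotProduct_neg hA hf hk ?_
  by_cases hc : k ≠ 0 ∧ j ∣ k
  · obtain ⟨i, rfl⟩ : ∃ i, k = i + 3 :=
      ⟨k - 3, by have := Nat.le_of_dvd (Nat.pos_of_ne_zero hc.1) hc.2; omega⟩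
    have hp₁ : p (i + 1) = -g (i + 1) := by
      rw [hp, if_neg fun h ↦ Nat.not_dvd_of_dvd_add_of_lt (r := 2) hc.2 two_pos (by omega) h.2]
    have hp₂ : p (i + 2) = -g (i + 2) := by
      rw [hp, if_neg fun h ↦ Nat.not_dvd_of_dvd_add_of_lt (r := 1) hc.2 one_pos (by omega) h.2]
    have hg₂ : g (i + 2) ≠ 0 := mt hls.grad_succ_eq_zero hk
    have hg₁ : g (i + 1) ≠ 0 := mt hls.grad_succ_eq_zero hg₂
    rw [hp, if_pos hc]
    have hα₂ : 0 < α (i + 2) := hls.stepsize_pos hA (hp₂ ▸ neg_dotProduct_self_neg hg₂)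
    exact (hls.dotProduct_grad_of_two_steepest hA hg₁ hg₂ hp₁ hp₂).trans_lt
      (neg_neg_of_pos (mul_pos hα₂ (dotProduct_self_pos hg₂)))
  · rw [hp, if_neg hc]
    exact neg_dotProduct_self_neg hk
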